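/- Let a, b, c > 0 with c - a - b < 0. Then lim_{z → 1⁻} (1-z)^{a+b-c} F(a,b,c;z) = Γ(c)Γ(a+b-c)/(Γ(a)Γ(b)). -/

import Mathlib

/-!
Put `s = a + b - c > 0`. Via `Γ(x + k) = Γ(x) (x)ₖ`, the coefficients of `F(a,b,c;z)` are
`(a)ₖ (b)ₖ / ((c)ₖ k!)`, while `(1 - z)^{-s}` has the binomial coefficients `(s)ₖ / k!`. By Euler's
limit formula `Γ(x) = lim n^x n! / (x)ₙ₊₁` and `a + b = c + s`, the ratio of these coefficients
tends to `L = Γ(c)Γ(s)/(Γ(a)Γ(b))`. Since `(1 - z)^{-s} → ∞` as `z → 1⁻`, an Abelian comparison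
gives `F(a,b,c;z) / (1 - z)^{-s} → L`: only finitely many coefficient ratios lie outside
`(L - ε, L + ε)`, and they contribute a bounded amount, negligible against the blowing-up
denominator.
-/

open Real Filter

/-- The Gauss hypergeometric series. -/
noncomputable def hypergeomF (a b c z : ℝ) : ℝ :=
  ∑' k : ℕ, Real.Gamma (a + k) * Real.Gamma (b + k) * Real.Gamma c /
    (Real.Gamma a * Real.Gamma b * Real.Gamma (c + k)) * z ^ k / (Nat.factorial k)

open Set Topology Asymptotics
open scoped Nat

theorem ascPochhammer_eval_eq_prod_range {S : Type*} [CommSemiring S] (x : S) (n : ℕ) :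
    (ascPochhammer S n).eval x = ∏ j ∈ Finset.range n, (x + j) := by
  induction n with
  | zero => simp
  | succ n ih => rw [ascPochhammer_succ_eval, ih, Finset.prod_range_succ]

theorem Real.Gamma_add_nat_eq_ascPochhammer_mul {x : ℝ} (hx : ∀ m : ℕ, x ≠ -m) (n : ℕ) :
    Gamma (x + n) = (ascPochhammer ℝ n).eval x * Gamma x := by
  induction n with
  | zero => simp
  | succ n ih =>
    have hxn : x + n ≠ 0 := fun h => hx n (eq_neg_of_add_eq_zero_left h)
    rw [ascPochhammer_succ_eval, Nat.cast_succ, ← add_assoc, Gamma_add_one hxn, ih]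
    ring

theorem hypergeomF_eq_tsum_ascPochhammer {a b c : ℝ} (ha : ∀ m : ℕ, a ≠ -m)
    (hb : ∀ m : ℕ, b ≠ -m) (hc : ∀ m : ℕ, c ≠ -m) (z : ℝ) :
    hypergeomF a b c z = ∑' k : ℕ, (ascPochhammer ℝ k).eval a * (ascPochhammer ℝ k).eval b /
      ((ascPochhammer ℝ k).eval c * k !) * z ^ k := by
  refine tsum_congr fun k => ?_
  have hck : (ascPochhammer ℝ k).eval c ≠ 0 := fun h0 => by
    obtain ⟨m, -, hm⟩ := (ascPochhammer_eval_eq_zero_iff k c).mp h0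
    exact hc m (neg_eq_iff_eq_neg.mp hm.symm)
  have := Gamma_ne_zero ha
  have := Gamma_ne_zero hb
  have := Gamma_ne_zero hc
  rw [Gamma_add_nat_eq_ascPochhammer_mul ha, Gamma_add_nat_eq_ascPochhammer_mul hb,
    Gamma_add_nat_eq_ascPochhammer_mul hc]
  field_simp

theorem Ring.choose_add_sub_one_eq_ascPochhammer_div {K : Type*} [Field K] [CharZero K]
    (s : K) (n : ℕ) : Ring.choose (s + n - 1) n = (ascPochhammer K n).eval s / n ! := by
  rw [← Ring.multichoose_eq, eq_div_iff (Nat.cast_ne_zero.mpr n.factorial_ne_zero), mul_comm,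
    ← nsmul_eq_mul, Ring.factorial_nsmul_multichoose_eq_ascPochhammer,
    Polynomial.ascPochhammer_smeval_eq_eval]

theorem Real.hasSum_ascPochhammer_div_factorial_mul_pow (s : ℝ) {x : ℝ} (hx : |x| < 1) :
    HasSum (fun n => (ascPochhammer ℝ n).eval s / n ! * x ^ n) (1 / (1 - x) ^ s) := by
  have hball : x ∈ Metric.eball (0 : ℝ) 1 := by
    simpa [enorm_eq_nnnorm, ← NNReal.coe_lt_one] using hx
  simpa [FormalMultilinearSeries.ofScalars_apply_eq, Ring.choose_add_sub_one_eq_ascPochhammer_div,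
    mul_comm] using (one_div_one_sub_rpow_hasFPowerSeriesOnBall_zero s).hasSum hball

theorem Real.GammaSeq_eq_ascPochhammer (x : ℝ) (n : ℕ) :
    GammaSeq x n = (n : ℝ) ^ x * n ! / (ascPochhammer ℝ (n + 1)).eval x := by
  rw [ascPochhammer_eval_eq_prod_range, GammaSeq]

theorem Real.tendsto_ascPochhammer_mul_div_ascPochhammer_mul {a b c s : ℝ} (ha : 0 < a)
    (hb : 0 < b) (hc : 0 < c) (hs : 0 < s) (habcs : a + b = c + s) :
    Tendsto (fun n : ℕ => (ascPochhammer ℝ n).eval a * (ascPochhammer ℝ n).eval b /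
        ((ascPochhammer ℝ n).eval c * (ascPochhammer ℝ n).eval s)) atTop
      (𝓝 (Gamma c * Gamma s / (Gamma a * Gamma b))) := by
  have hGammaSeq : Tendsto (fun n => GammaSeq c n * GammaSeq s n / (GammaSeq a n * GammaSeq b n))
      atTop (𝓝 (Gamma c * Gamma s / (Gamma a * Gamma b))) :=
    ((GammaSeq_tendsto_Gamma c).mul (GammaSeq_tendsto_Gamma s)).div
      ((GammaSeq_tendsto_Gamma a).mul (GammaSeq_tendsto_Gamma b))
      (mul_pos (Gamma_pos_of_pos ha) (Gamma_pos_of_pos hb)).ne'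
  refine (tendsto_add_atTop_iff_nat 1).mp (hGammaSeq.congr' ?_)
  filter_upwards [eventually_ne_atTop 0] with n hn
  have hpow : (n : ℝ) ^ a * (n : ℝ) ^ b = (n : ℝ) ^ c * (n : ℝ) ^ s := by
    rw [← rpow_add (by positivity), ← rpow_add (by positivity), habcs]
  have := ascPochhammer_pos (n + 1) a ha
  have := ascPochhammer_pos (n + 1) b hb
  have := ascPochhammer_pos (n + 1) c hc
  have := ascPochhammer_pos (n + 1) s hs
  have : (n : ℝ) ^ a * (n : ℝ) ^ b ≠ 0 := by positivity
  simp only [GammaSeq_eq_ascPochhammer]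
  field_simp
  exact hpow.symm

theorem abs_tsum_mul_pow_le {D B : ℕ → ℝ} {ε z G : ℝ} {N : ℕ} (hε : 0 ≤ ε) (hB : ∀ k, 0 ≤ B k)
    (hDB : ∀ k ≥ N, |D k| ≤ ε * B k) (hz : z ∈ Icc (0 : ℝ) 1)
    (hG : HasSum (fun k => B k * z ^ k) G) :
    |∑' k, D k * z ^ k| ≤ ∑ k ∈ Finset.range N, |D k| + ε * G := by
  have hhead : HasSum (fun k => if k < N then |D k| else 0) (∑ k ∈ Finset.range N, |D k|) := by
    have : HasSum (fun k => if k < N then |D k| else 0)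
        (∑ k ∈ Finset.range N, if k < N then |D k| else 0) :=
      hasSum_sum_of_ne_finset_zero fun k hk => if_neg (by simpa using hk)
    rwa [Finset.sum_congr rfl fun k hk => if_pos (Finset.mem_range.mp hk)] at this
  refine Real.norm_eq_abs _ ▸ tsum_of_norm_bounded (hhead.add (hG.mul_left ε)) fun k => ?_
  have hzk : z ^ k ≤ 1 := pow_le_one₀ hz.1 hz.2
  have hBzk : 0 ≤ ε * (B k * z ^ k) := mul_nonneg hε (mul_nonneg (hB k) (pow_nonneg hz.1 k))
  rw [Real.norm_eq_abs, abs_mul, abs_of_nonneg (pow_nonneg hz.1 k)]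
  split_ifs with hk
  · nlinarith [abs_nonneg (D k)]
  · nlinarith [hDB k (not_lt.mp hk), pow_nonneg hz.1 k]

theorem isLittleO_tsum_mul_pow_nhdsLT_one {D B : ℕ → ℝ} (hB : ∀ k, 0 ≤ B k)
    (hDB : D =o[atTop] B) (hBsum : ∀ z ∈ Ioo (0 : ℝ) 1, Summable fun k => B k * z ^ k)
    (hBtop : Tendsto (fun z => ∑' k, B k * z ^ k) (𝓝[<] 1) atTop) :
    (fun z => ∑' k, D k * z ^ k) =o[𝓝[<] 1] fun z => ∑' k, B k * z ^ k := by
  refine IsLittleO.of_bound fun ε hε => ?_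
  obtain ⟨N, hN⟩ := eventually_atTop.mp (hDB.bound (half_pos hε))
  set C := ∑ k ∈ Finset.range N, |D k|
  filter_upwards [Ioo_mem_nhdsLT one_pos, hBtop.eventually_ge_atTop (C / (ε / 2))] with z hz hCG
  have hG : 0 ≤ ∑' k, B k * z ^ k := tsum_nonneg fun k => mul_nonneg (hB k) (pow_nonneg hz.1.le k)
  have hbound := abs_tsum_mul_pow_le (half_pos hε).le hB
    (fun k hk => by simpa [abs_of_nonneg (hB k)] using hN k hk) (Ioo_subset_Icc_self hz)
    (hBsum z hz).hasSum
  rw [div_le_iff₀ (half_pos hε)] at hCG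
  rw [Real.norm_eq_abs, Real.norm_eq_abs, abs_of_nonneg hG]
  linarith

theorem tendsto_tsum_mul_pow_div_tsum_mul_pow {A B : ℕ → ℝ} {L : ℝ} (hB : ∀ k, 0 < B k)
    (hAB : Tendsto (fun k => A k / B k) atTop (𝓝 L))
    (hBsum : ∀ z ∈ Ioo (0 : ℝ) 1, Summable fun k => B k * z ^ k)
    (hBtop : Tendsto (fun z => ∑' k, B k * z ^ k) (𝓝[<] 1) atTop) :
    Tendsto (fun z => (∑' k, A k * z ^ k) / ∑' k, B k * z ^ k) (𝓝[<] 1) (𝓝 L) := by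
  set D := fun k => A k - L * B k
  have hDB : D =o[atTop] B := by
    have := ((isLittleO_one_iff ℝ).mpr (tendsto_sub_nhds_zero_iff.mpr hAB)).mul_isBigO
      (isBigO_refl B atTop)
    refine (this.congr_left fun k => ?_).congr_right fun k => one_mul (B k)
    simp only [D, sub_mul, div_mul_cancel₀ _ (hB k).ne']
  have hDsum : ∀ z ∈ Ioo (0 : ℝ) 1, Summable fun k => D k * z ^ k := fun z hz =>
    summable_of_isBigO_nat (hBsum z hz) (hDB.isBigO.mul (isBigO_refl _ _))
  have hsplit : ∀ z ∈ Ioo (0 : ℝ) 1,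
      ∑' k, A k * z ^ k = ∑' k, D k * z ^ k + L * ∑' k, B k * z ^ k := fun z hz => by
    rw [← tsum_mul_left, ← (hDsum z hz).tsum_add ((hBsum z hz).mul_left L)]
    exact tsum_congr fun k => by simp only [D]; ring
  have hquot := (isLittleO_tsum_mul_pow_nhdsLT_one (fun k => (hB k).le) hDB hBsum hBtop
    ).tendsto_div_nhds_zero.add_const L
  rw [zero_add] at hquot
  refine hquot.congr' ?_
  filter_upwards [Ioo_mem_nhdsLT one_pos, hBtop.eventually_gt_atTop 0] with z hz hG
  rw [hsplit z hz, add_div, mul_div_cancel_right₀ _ hG.ne']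

theorem tendsto_one_div_one_sub_rpow_nhdsLT_one {s : ℝ} (hs : 0 < s) :
    Tendsto (fun z : ℝ => 1 / (1 - z) ^ s) (𝓝[<] 1) atTop := by
  have h1 : Tendsto (fun z : ℝ => 1 - z) (𝓝[<] 1) (𝓝[>] 0) := by
    refine tendsto_nhdsWithin_of_tendsto_nhds_of_eventually_within _ ?_ ?_
    · exact ((continuous_sub_left 1).tendsto' 1 0 (sub_self 1)).mono_left nhdsWithin_le_nhds
    · filter_upwards [self_mem_nhdsWithin] with z hz using sub_pos.mpr (mem_Iio.mp hz)
  refine ((tendsto_rpow_neg_nhdsGT_zero (neg_neg_of_pos hs)).comp h1).congr' ?_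
  filter_upwards [self_mem_nhdsWithin] with z hz
  simp [rpow_neg (sub_pos.mpr (mem_Iio.mp hz)).le]

/-- Power-type blow-up of `F(a,b,c;z)` at `z = 1` when `c - a - b < 0`:
`(1-z)^{a+b-c} F(a,b,c;z) → Γ(c)Γ(a+b-c)/(Γ(a)Γ(b))` as `z → 1⁻`. -/
theorem hypergeom_power_blowup (a b c : ℝ) (ha : 0 < a) (hb : 0 < b) (hc : 0 < c)
    (h : c - a - b < 0) :
    Tendsto (fun z : ℝ => (1 - z) ^ (a + b - c) * hypergeomF a b c z)
      (nhdsWithin 1 (Set.Iio 1))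
      (nhds (Real.Gamma c * Real.Gamma (a + b - c) / (Real.Gamma a * Real.Gamma b))) := by
  set s := a + b - c
  have hs : 0 < s := by linarith
  have hnot_pole : ∀ x : ℝ, 0 < x → ∀ m : ℕ, x ≠ -m := fun x hx m =>
    ((neg_nonpos.mpr m.cast_nonneg).trans_lt hx).ne'
  have hbinom : ∀ z ∈ Ioo (0 : ℝ) 1,
      HasSum (fun k => (ascPochhammer ℝ k).eval s / k ! * z ^ k) (1 / (1 - z) ^ s) := fun z hz =>
    hasSum_ascPochhammer_div_factorial_mul_pow s (abs_lt.mpr ⟨by linarith [hz.1], hz.2⟩)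
  have hratio : Tendsto (fun k => (ascPochhammer ℝ k).eval a * (ascPochhammer ℝ k).eval b /
      ((ascPochhammer ℝ k).eval c * k !) / ((ascPochhammer ℝ k).eval s / k !)) atTop
      (𝓝 (Gamma c * Gamma s / (Gamma a * Gamma b))) := by
    refine (tendsto_ascPochhammer_mul_div_ascPochhammer_mul ha hb hc hs (by ring)).congr fun k => ?_
    have := ascPochhammer_pos k c hc
    have := ascPochhammer_pos k s hs
    field_simp
  have hlim := tendsto_tsum_mul_pow_div_tsum_mul_pow
    (fun k => div_pos (ascPochhammer_pos k s hs) (by positivity)) hratio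
    (fun z hz => (hbinom z hz).summable)
    ((tendsto_one_div_one_sub_rpow_nhdsLT_one hs).congr' (by
      filter_upwards [Ioo_mem_nhdsLT one_pos] with z hz using (hbinom z hz).tsum_eq.symm))
  refine hlim.congr' ?_
  filter_upwards [Ioo_mem_nhdsLT one_pos] with z hz
  rw [(hbinom z hz).tsum_eq, hypergeomF_eq_tsum_ascPochhammer (hnot_pole a ha) (hnot_pole b hb)
    (hnot_pole c hc), div_div_eq_mul_div, div_one, mul_comm]
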